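/- arXiv:2604.16188 — 7 statements merged into one kernel-verified Lean document; each statement's English description precedes it below -/
import Mathlib

section
/- For any a, b ∈ ℕ, the two-color ordered Ramsey number of the monotone path of order a versus the complete graph of order b equals 1 + (a−1)(b−1). -/
open SimpleGraph Finset

/-- A symmetric `k`-edge-coloring `χ` of the complete graph on `Fin n` contains a copy of `H`
in color `j` via a strictly increasing embedding. -/
def ContainsOrd {m n k : ℕ} (H : SimpleGraph (Fin m))
    (χ : Fin n → Fin n → Fin k) (j : Fin k) : Prop :=
  ∃ φ : Fin m → Fin n, StrictMono φ ∧ ∀ u v : Fin m, H.Adj u v → χ (φ u) (φ v) = j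

/-- Contains a copy via an embedding that is increasing up to a cyclic permutation. -/
def ContainsCyc {m n k : ℕ} (H : SimpleGraph (Fin m))
    (χ : Fin n → Fin n → Fin k) (j : Fin k) : Prop :=
  ∃ φ : Fin m → Fin n, (∃ t : Fin m, StrictMono fun i : Fin m => φ (i + t)) ∧
    ∀ u v : Fin m, H.Adj u v → χ (φ u) (φ v) = j

/-- Contains a copy via an arbitrary injective embedding. -/
def ContainsStd {m n k : ℕ} (H : SimpleGraph (Fin m))
    (χ : Fin n → Fin n → Fin k) (j : Fin k) : Prop :=
  ∃ φ : Fin m → Fin n, Function.Injective φ ∧ ∀ u v : Fin m, H.Adj u v → χ (φ u) (φ v) = j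

/-- The ordered Ramsey number of a family of graphs. -/
noncomputable def Rord {k : ℕ} (m : Fin k → ℕ) (H : ∀ j, SimpleGraph (Fin (m j))) : ℕ :=
  sInf {n | ∀ χ : Fin n → Fin n → Fin k, (∀ u v, χ u v = χ v u) → ∃ j, ContainsOrd (H j) χ j}

/-- The cyclic Ramsey number of a family of graphs. -/
noncomputable def Rcyc {k : ℕ} (m : Fin k → ℕ) (H : ∀ j, SimpleGraph (Fin (m j))) : ℕ :=
  sInf {n | ∀ χ : Fin n → Fin n → Fin k, (∀ u v, χ u v = χ v u) → ∃ j, ContainsCyc (H j) χ j}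

/-- The standard Ramsey number of a family of graphs. -/
noncomputable def Rstd {k : ℕ} (m : Fin k → ℕ) (H : ∀ j, SimpleGraph (Fin (m j))) : ℕ :=
  sInf {n | ∀ χ : Fin n → Fin n → Fin k, (∀ u v, χ u v = χ v u) → ∃ j, ContainsStd (H j) χ j}

/-- The two-color ordered Ramsey number. -/
noncomputable def Rord2 {a b : ℕ} (H₁ : SimpleGraph (Fin a)) (H₂ : SimpleGraph (Fin b)) : ℕ :=
  sInf {n | ∀ χ : Fin n → Fin n → Fin 2, (∀ u v, χ u v = χ v u) →
    ContainsOrd H₁ χ 0 ∨ ContainsOrd H₂ χ 1}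

/-- The two-color cyclic Ramsey number. -/
noncomputable def Rcyc2 {a b : ℕ} (H₁ : SimpleGraph (Fin a)) (H₂ : SimpleGraph (Fin b)) : ℕ :=
  sInf {n | ∀ χ : Fin n → Fin n → Fin 2, (∀ u v, χ u v = χ v u) →
    ContainsCyc H₁ χ 0 ∨ ContainsCyc H₂ χ 1}

/-- The monotone path of order `n`. -/
def monPath (n : ℕ) : SimpleGraph (Fin n) :=
  SimpleGraph.fromRel fun u v => (u : ℕ) + 1 = (v : ℕ)

/-- The monotone cycle of order `n`. -/
def monCycle (n : ℕ) : SimpleGraph (Fin n) :=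
  SimpleGraph.fromRel fun u v => (u : ℕ) + 1 = (v : ℕ) ∨ ((u : ℕ) = 0 ∧ (v : ℕ) = n - 1)

/-- The start-central star of order `n` (center `0`). -/
def starSC (n : ℕ) : SimpleGraph (Fin n) :=
  SimpleGraph.fromRel fun u _ => (u : ℕ) = 0

/-- The star of order `n` with center `c`. -/
def starG (n : ℕ) (c : Fin n) : SimpleGraph (Fin n) :=
  SimpleGraph.fromRel fun u _ => u = c

/-- The nested matching of order `n`. -/
def nestedMatching (n : ℕ) : SimpleGraph (Fin n) :=
  SimpleGraph.fromRel fun u v => (u : ℕ) + (v : ℕ) = n - 1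

/-- Rotational isomorphism of two graphs on `Fin m`. -/
def RotIso {m : ℕ} (G₁ G₂ : SimpleGraph (Fin m)) : Prop :=
  ∃ s : Fin m, ∀ u v : Fin m, G₁.Adj u v ↔ G₂.Adj (u + s) (v + s)

def pathLen {n : ℕ} (χ : Fin n → Fin n → Fin 2) (v : Fin n) : ℕ :=
  1 + ((Finset.univ.filter fun u => u < v ∧ χ u v = 0).attach.sup
    fun u => pathLen χ u.1)
termination_by v.val
decreasing_by
  have h := u.2
  simp only [Finset.mem_filter] at h
  exact h.2.1

lemma pathLen_eq {n : ℕ} (χ : Fin n → Fin n → Fin 2) (v : Fin n) :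
    pathLen χ v = 1 + ((Finset.univ.filter fun u => u < v ∧ χ u v = 0).sup (pathLen χ)) := by
  rw [pathLen]; congr 1; exact Finset.sup_attach _ _

lemma pathLen_lt {n : ℕ} (χ : Fin n → Fin n → Fin 2) {u v : Fin n}
    (huv : u < v) (hc : χ u v = 0) : pathLen χ u < pathLen χ v := by
  rw [pathLen_eq χ v]
  have hm : u ∈ Finset.univ.filter fun w => w < v ∧ χ w v = 0 := by
    simp [huv, hc]
  have := Finset.le_sup (f := pathLen χ) hm
  omega

lemma pathLen_path {n : ℕ} (χ : Fin n → Fin n → Fin 2) :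
    ∀ ℓ : ℕ, ∀ hℓpos : 0 < ℓ, ∀ v : Fin n, ℓ ≤ pathLen χ v →
    ∃ φ : Fin ℓ → Fin n, StrictMono φ ∧ φ ⟨ℓ - 1, by omega⟩ = v ∧
      ∀ i j : Fin ℓ, (i : ℕ) + 1 = (j : ℕ) → χ (φ i) (φ j) = 0 := by
  intro ℓ
  induction ℓ with
  | zero => omega
  | succ ℓ ih =>
    intro _ v hle
    rcases Nat.eq_zero_or_pos ℓ with hℓ | hℓ
    · subst hℓ
      refine ⟨fun _ => v,
        fun i j hij => absurd (Fin.lt_def.mp hij) (by have := i.isLt; have := j.isLt; omega),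
        rfl, fun i j hij => absurd hij (by have := j.isLt; omega)⟩
    · rw [pathLen_eq] at hle
      have hsne : (Finset.univ.filter fun w => w < v ∧ χ w v = 0).Nonempty := by
        by_contra hne
        rw [Finset.not_nonempty_iff_eq_empty] at hne
        rw [hne] at hle
        simp at hle; omega
      obtain ⟨u, hus, hueq⟩ := Finset.exists_mem_eq_sup _ hsne (pathLen χ)
      have hul : ℓ ≤ pathLen χ u := by omega
      simp only [Finset.mem_filter] at hus
      obtain ⟨ψ, hψmono, hψlast, hψedge⟩ := ih hℓ u hul
      refine ⟨fun i => if h : (i : ℕ) < ℓ then ψ ⟨i, h⟩ else v, ?_, ?_, ?_⟩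
      · intro i j hij
        by_cases hj : (j : ℕ) < ℓ
        · have hi : (i : ℕ) < ℓ := by have := Fin.lt_def.mp hij; omega
          simp only [dif_pos hi, dif_pos hj]
          exact hψmono (by exact hij)
        · have hjv : (j : ℕ) = ℓ := by have := j.isLt; omega
          have hi : (i : ℕ) < ℓ := by have := Fin.lt_def.mp hij; omega
          simp only [dif_pos hi, dif_neg hj]
          calc ψ ⟨i, hi⟩ ≤ ψ ⟨ℓ - 1, by omega⟩ := hψmono.monotone (by simp [Fin.le_def]; omega)
            _ = u := hψlast
            _ < v := hus.2.1
      · simp only [Nat.succ_sub_one]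
        rw [dif_neg (by omega)]
      · intro i j hij
        have hi : (i : ℕ) < ℓ := by have := j.isLt; omega
        dsimp only
        rw [dif_pos hi]
        by_cases hj : (j : ℕ) < ℓ
        · rw [dif_pos hj]
          exact hψedge _ _ (by simpa using hij)
        · rw [dif_neg hj]
          have hje : (j : ℕ) = ℓ := by have := j.isLt; omega
          have : ψ ⟨(i : ℕ), hi⟩ = u := by
            rw [← hψlast]; congr 1; simp only [Fin.mk.injEq]; omega
          rw [this]; exact hus.2.2

open SimpleGraph in
lemma upper_mem (a b n : ℕ) (ha : 2 ≤ a) (hb : 2 ≤ b) (hn : n = 1 + (a-1)*(b-1))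
    (χ : Fin n → Fin n → Fin 2)
    (hsym : ∀ u v, χ u v = χ v u) :
    (∃ φ : Fin a → Fin n, StrictMono φ ∧
      ∀ u v : Fin a, (SimpleGraph.fromRel (V := Fin a) fun u v => (u : ℕ) + 1 = (v : ℕ)).Adj u v → χ (φ u) (φ v) = 0) ∨
    (∃ φ : Fin b → Fin n, StrictMono φ ∧
      ∀ u v : Fin b, (⊤ : SimpleGraph (Fin b)).Adj u v → χ (φ u) (φ v) = 1) := by
  by_cases hpath : ∃ v : Fin n, a ≤ pathLen χ v
  · left
    obtain ⟨v, hv⟩ := hpath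
    obtain ⟨φ, hmono, _, hedge⟩ := pathLen_path χ a (by omega) v hv
    refine ⟨φ, hmono, ?_⟩
    intro u w huw
    rw [SimpleGraph.fromRel_adj] at huw
    obtain ⟨hne, hor | hor⟩ := huw
    · exact hedge u w hor
    · rw [hsym]; exact hedge w u hor
  · right
    push_neg at hpath
    have hmapsto : ∀ v ∈ (Finset.univ : Finset (Fin n)), pathLen χ v ∈ Finset.Icc 1 (a-1) := by
      intro v _
      rw [Finset.mem_Icc]
      constructor
      · rw [pathLen_eq]; omega
      · have := hpath v; omega
    have hcard : (Finset.Icc 1 (a-1)).card * (b-1) < (Finset.univ : Finset (Fin n)).card := by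
      simp [Nat.card_Icc]
      omega
    obtain ⟨y, _, hy⟩ := Finset.exists_lt_card_fiber_of_mul_lt_card_of_maps_to hmapsto hcard
    obtain ⟨T, hTsub, hTcard⟩ := Finset.exists_subset_card_eq
      (s := Finset.univ.filter fun x => pathLen χ x = y) (n := b) (by omega)
    let ψ : Fin b ≃o {x // x ∈ T} := T.orderIsoOfFin hTcard
    refine ⟨fun i => (ψ i : Fin n), fun i j hij => by exact_mod_cast ψ.strictMono hij, ?_⟩
    intro u w huw
    rw [SimpleGraph.top_adj] at huw
    have hfin2 : ∀ c : Fin 2, c ≠ 0 → c = 1 := by decide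
    have key : ∀ x z : Fin n, x ∈ T → z ∈ T → x < z → χ x z = 1 := by
      intro x z hx hz hxz
      apply hfin2
      intro hc0
      have h1 := pathLen_lt χ hxz hc0
      have hx' := Finset.mem_filter.mp (hTsub hx)
      have hz' := Finset.mem_filter.mp (hTsub hz)
      omega
    rcases lt_trichotomy ((ψ u : Fin n)) ((ψ w : Fin n)) with h | h | h
    · exact key _ _ (ψ u).2 (ψ w).2 h
    · exact absurd (ψ.injective (Subtype.ext h)) huw
    · rw [hsym]; exact key _ _ (ψ w).2 (ψ u).2 h

open SimpleGraph in
lemma lower_bad (a b n : ℕ) (ha : 2 ≤ a) (hb : 2 ≤ b) (hn : n ≤ (a-1)*(b-1)) :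
    ∃ χ : Fin n → Fin n → Fin 2, (∀ u v, χ u v = χ v u) ∧
    ¬ (∃ φ : Fin a → Fin n, StrictMono φ ∧
      ∀ u v : Fin a, (SimpleGraph.fromRel (V := Fin a) fun u v => (u : ℕ) + 1 = (v : ℕ)).Adj u v → χ (φ u) (φ v) = 0) ∧
    ¬ (∃ φ : Fin b → Fin n, StrictMono φ ∧
      ∀ u v : Fin b, (⊤ : SimpleGraph (Fin b)).Adj u v → χ (φ u) (φ v) = 1) := by
  refine ⟨fun u v => if (u : ℕ) / (a-1) = (v : ℕ) / (a-1) then 0 else 1, ?_, ?_, ?_⟩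
  · intro u v
    dsimp only
    rcases eq_or_ne ((u : ℕ) / (a-1)) ((v : ℕ) / (a-1)) with h | h
    · rw [if_pos h, if_pos h.symm]
    · rw [if_neg h, if_neg (Ne.symm h)]
  · rintro ⟨φ, hmono, hedge⟩
    -- all quotients equal
    have hq : ∀ i : ℕ, (hi : i < a) → (φ ⟨i, hi⟩ : ℕ) / (a-1) = (φ ⟨0, by omega⟩ : ℕ) / (a-1) := by
      intro i
      induction i with
      | zero => intro _; rfl
      | succ i ih =>
        intro hi
        have hadj : (SimpleGraph.fromRel (V := Fin a) fun u v => (u : ℕ) + 1 = (v : ℕ)).Adj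
            ⟨i, by omega⟩ ⟨i+1, hi⟩ := by
          rw [SimpleGraph.fromRel_adj]
          constructor
          · simp [Fin.ext_iff]
          · left; simp
        have := hedge _ _ hadj
        dsimp only at this
        by_cases hc : (φ ⟨i, by omega⟩ : ℕ) / (a-1) = (φ ⟨i+1, hi⟩ : ℕ) / (a-1)
        · rw [← hc]; exact ih (by omega)
        · rw [if_neg hc] at this
          exact absurd this (by decide)
    -- strict growth
    have hg : ∀ i : ℕ, (hi : i < a) → (φ ⟨0, by omega⟩ : ℕ) + i ≤ (φ ⟨i, hi⟩ : ℕ) := by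
      intro i
      induction i with
      | zero => intro _; simp
      | succ i ih =>
        intro hi
        have h1 := ih (by omega)
        have h2 : φ ⟨i, by omega⟩ < φ ⟨i+1, hi⟩ := hmono (by simp [Fin.lt_def])
        rw [Fin.lt_def] at h2
        omega
    have h1 := hq (a-1) (by omega)
    have h2 := hg (a-1) (by omega)
    have hd : 0 < a - 1 := by omega
    have h3 := Nat.div_le_div_right (c := a-1) h2
    rw [Nat.add_div_right _ hd, h1] at h3
    omega
  · rintro ⟨φ, hmono, hedge⟩
    have hq : ∀ i : ℕ, (hi : i < b) → i ≤ (φ ⟨i, hi⟩ : ℕ) / (a-1) := by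
      intro i
      induction i with
      | zero => intro _; exact Nat.zero_le _
      | succ i ih =>
        intro hi
        have h1 := ih (by omega)
        have hadj : (⊤ : SimpleGraph (Fin b)).Adj ⟨i, by omega⟩ ⟨i+1, hi⟩ := by
          simp [Fin.ext_iff]
        have hc := hedge _ _ hadj
        dsimp only at hc
        have hne : (φ ⟨i, by omega⟩ : ℕ) / (a-1) ≠ (φ ⟨i+1, hi⟩ : ℕ) / (a-1) := by
          intro h
          rw [if_pos h] at hc
          exact absurd hc (by decide)
        have hmo : φ ⟨i, by omega⟩ < φ ⟨i+1, hi⟩ := hmono (by simp [Fin.lt_def])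
        rw [Fin.lt_def] at hmo
        have : (φ ⟨i, by omega⟩ : ℕ) / (a-1) ≤ (φ ⟨i+1, hi⟩ : ℕ) / (a-1) :=
          Nat.div_le_div_right (by omega)
        omega
    have h1 := hq (b-1) (by omega)
    have h2 : ((φ ⟨b-1, by omega⟩ : Fin n) : ℕ) < n := (φ _).isLt
    have h3 : (b-1) * (a-1) ≤ (φ ⟨b-1, by omega⟩ : ℕ) :=
      (Nat.le_div_iff_mul_le (by omega)).mp h1
    have h4 : (b-1)*(a-1) < (b-1)*(a-1) :=
      lt_of_le_of_lt h3 (lt_of_lt_of_le h2 (le_of_le_of_eq hn (Nat.mul_comm _ _)))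
    exact absurd h4 (lt_irrefl _)


theorem stmt2 (a b : ℕ) (ha : 1 ≤ a) (hb : 1 ≤ b) :
    Rord2 (monPath a) (⊤ : SimpleGraph (Fin b)) = 1 + (a - 1) * (b - 1) := by
  have hmem : (1 + (a - 1) * (b - 1)) ∈
      {n | ∀ χ : Fin n → Fin n → Fin 2, (∀ u v, χ u v = χ v u) →
        ContainsOrd (monPath a) χ 0 ∨ ContainsOrd (⊤ : SimpleGraph (Fin b)) χ 1} := by
    intro χ hsym
    by_cases ha2 : 2 ≤ a
    · by_cases hb2 : 2 ≤ b
      · rcases upper_mem a b _ ha2 hb2 rfl χ hsym with ⟨φ, h1, h2⟩ | ⟨φ, h1, h2⟩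
        · exact Or.inl ⟨φ, h1, fun u v h => h2 u v h⟩
        · exact Or.inr ⟨φ, h1, fun u v h => h2 u v h⟩
      · refine Or.inr ⟨fun _ => ⟨0, by omega⟩, ?_, ?_⟩
        · intro i j hij
          exact absurd (Fin.lt_def.mp hij) (by have := i.isLt; have := j.isLt; omega)
        · intro u v h
          exact absurd (Fin.ext (by have := u.isLt; have := v.isLt; omega)) h.ne
    · refine Or.inl ⟨fun _ => ⟨0, by omega⟩, ?_, ?_⟩
      · intro i j hij
        exact absurd (Fin.lt_def.mp hij) (by have := i.isLt; have := j.isLt; omega)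
      · intro u v h
        exact absurd (Fin.ext (by have := u.isLt; have := v.isLt; omega)) h.ne
  rw [Rord2]
  apply le_antisymm
  · exact Nat.sInf_le hmem
  · apply le_csInf ⟨_, hmem⟩
    intro n hn
    by_contra hlt
    push_neg at hlt
    by_cases ha2 : 2 ≤ a
    · by_cases hb2 : 2 ≤ b
      · obtain ⟨χ, hsym, hL, hR⟩ := lower_bad a b n ha2 hb2 (by omega)
        rcases hn χ hsym with h | h
        · exact hL h
        · exact hR h
      · have hn0 : n = 0 := by
          have : b = 1 := by omega
          subst this
          simpa using hlt
        subst hn0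
        rcases hn (fun _ _ => 0) (fun _ _ => rfl) with ⟨φ, _, _⟩ | ⟨φ, _, _⟩
        · exact (φ ⟨0, by omega⟩).elim0
        · exact (φ ⟨0, by omega⟩).elim0
    · have hn0 : n = 0 := by
        have : a = 1 := by omega
        subst this
        simpa using hlt
      subst hn0
      rcases hn (fun _ _ => 0) (fun _ _ => rfl) with ⟨φ, _, _⟩ | ⟨φ, _, _⟩
      · exact (φ ⟨0, by omega⟩).elim0
      · exact (φ ⟨0, by omega⟩).elim0
end

section
/- For any k ∈ ℕ and stars S_{n₁},…,S_{n_k}, the cyclic Ramsey number equals the standard Ramsey number: R_cyc(S_{n₁},…,S_{n_k}) = R(S_{n₁},…,S_{n_k}). -/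
open SimpleGraph Finset

lemma aux_cyc_to_std {m n k : ℕ} {H : SimpleGraph (Fin m)} {χ : Fin n → Fin n → Fin k} {j : Fin k}
    (h : ContainsCyc H χ j) : ContainsStd H χ j := by
  obtain ⟨φ, ⟨t, ht⟩, hadj⟩ := h
  haveI : NeZero m := ⟨fun hm => (hm ▸ t).elim0⟩
  refine ⟨φ, ?_, hadj⟩
  intro a b hab
  have e1 : φ ((a - t) + t) = φ ((b - t) + t) := by
    rw [sub_add_cancel, sub_add_cancel]; exact hab
  have e2 : a - t = b - t := ht.injective e1
  have e3 : (a - t) + t = (b - t) + t := by rw [e2]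
  rwa [sub_add_cancel, sub_add_cancel] at e3

lemma aux_std_to_cyc {m n k : ℕ} {c : Fin m} {χ : Fin n → Fin n → Fin k}
    (hsym : ∀ u v, χ u v = χ v u) {j : Fin k}
    (h : ContainsStd (starG m c) χ j) : ContainsCyc (starG m c) χ j := by
  obtain ⟨φ, hinj, hadj⟩ := h
  haveI : NeZero m := ⟨fun hm => (hm ▸ c).elim0⟩
  set s : Finset (Fin n) := Finset.image φ Finset.univ with hs
  have hcard : s.card = m := by
    rw [hs, Finset.card_image_of_injective _ hinj, Finset.card_univ, Fintype.card_fin]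
  set σ : Fin m → Fin n := fun i => (s.orderIsoOfFin hcard i : Fin n) with hσ
  have hσmono : StrictMono σ := fun a b hab => (s.orderIsoOfFin hcard).strictMono hab
  have hσmem : ∀ i, σ i ∈ s := fun i => (s.orderIsoOfFin hcard i).2
  have hc : φ c ∈ s := by simp [hs]
  obtain ⟨p, hp⟩ : ∃ p, σ p = φ c := by
    obtain ⟨p, hp⟩ := (s.orderIsoOfFin hcard).surjective ⟨φ c, hc⟩
    exact ⟨p, congrArg Subtype.val hp⟩
  have hcan : ∀ x : Fin m, x + (c - p) + (p - c) = x := fun x => by abel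
  have hψc : σ (c + (p - c)) = φ c := by
    rw [show c + (p - c) = p from by abel, hp]
  refine ⟨fun i => σ (i + (p - c)), ⟨c - p, ?_⟩, ?_⟩
  · intro a b hab
    show σ (a + (c - p) + (p - c)) < σ (b + (c - p) + (p - c))
    rw [hcan, hcan]
    exact hσmono hab
  · intro u v huv
    rw [starG, SimpleGraph.fromRel_adj] at huv
    obtain ⟨hne, hc'⟩ := huv
    have key : ∀ w : Fin m, w ≠ c → χ (φ c) (σ (w + (p - c))) = j := by
      intro w hw
      have hmem := hσmem (w + (p - c))
      rw [hs, Finset.mem_image] at hmem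
      obtain ⟨x, _, hx⟩ := hmem
      have hxc : x ≠ c := by
        intro hxeq
        apply hw
        have h1 : σ (w + (p - c)) = σ (c + (p - c)) := by rw [hψc, ← hx, hxeq]
        exact add_right_cancel (hσmono.injective h1)
      rw [← hx]
      exact hadj c x (by rw [starG, SimpleGraph.fromRel_adj]; exact ⟨Ne.symm hxc, Or.inl rfl⟩)
    rcases hc' with hu | hv
    · show χ (σ (u + (p - c))) (σ (v + (p - c))) = j
      rw [hu, hψc]
      exact key v (hu ▸ hne.symm)
    · show χ (σ (u + (p - c))) (σ (v + (p - c))) = j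
      rw [hv, hψc, hsym]
      exact key u (hv ▸ hne)

theorem stmt4 {k : ℕ} (n : Fin k → ℕ) (c : ∀ j, Fin (n j)) :
    Rcyc n (fun j => starG (n j) (c j)) = Rstd n (fun j => starG (n j) (c j)) := by
  unfold Rcyc Rstd
  congr 1
  ext N
  constructor
  · intro h χ hsym
    obtain ⟨j, hj⟩ := h χ hsym
    exact ⟨j, aux_cyc_to_std hj⟩
  · intro h χ hsym
    obtain ⟨j, hj⟩ := h χ hsym
    exact ⟨j, aux_std_to_cyc hsym hj⟩
end

section
/- Let H be a connected graph of order a. Then for any b ∈ ℕ, the two-color ordered Ramsey number of H versus the monotone path of order b equals 1 + (a−1)(b−1). -/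
open SimpleGraph Finset

/-!
Label each vertex `v` by the number of edges of the longest color-`1` increasing path ending
at `v`. A color-`1` edge `u < v` forces the label of `v` to exceed that of `u`, so each label
class is a color-`0` clique; with no color-`1` path on `b` vertices only `b - 1` labels occur,
and more than `(a - 1)(b - 1)` vertices give a label class of size `a`, which hosts every `H`.
Conversely, cutting `(a - 1)(b - 1)` vertices into `b - 1` consecutive blocks of size `a - 1`
and coloring exactly the edges inside a block with `0` works: a connected color-`0` copy of `H`
stays inside one block, and a color-`1` increasing path visits each block at most once.
-/

lemma monPath_adj {b : ℕ} {u v : Fin b} :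
    (monPath b).Adj u v ↔ (u : ℕ) + 1 = v ∨ (v : ℕ) + 1 = u := by
  simp only [monPath, fromRel_adj, ne_eq, Fin.ext_iff]
  omega

section MonotonePaths

variable {n k : ℕ} (χ : Fin n → Fin n → Fin k) (j : Fin k)

def HasMonPathTo (m : ℕ) (v : Fin n) : Prop :=
  ∃ φ : Fin (m + 1) → Fin n, φ (Fin.last m) = v ∧
    ∀ i : Fin m, φ i.castSucc < φ i.succ ∧ χ (φ i.castSucc) (φ i.succ) = j

noncomputable def maxMonPathLen (v : Fin n) : ℕ :=
  sSup {m | HasMonPathTo χ j m v}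

variable {χ j}

lemma hasMonPathTo_zero (v : Fin n) : HasMonPathTo χ j 0 v :=
  ⟨fun _ => v, rfl, fun i => i.elim0⟩

lemma HasMonPathTo.lt {m : ℕ} {v : Fin n} (h : HasMonPathTo χ j m v) : m < n := by
  obtain ⟨φ, -, hφ⟩ := h
  simpa using Fintype.card_le_of_injective φ
    (Fin.strictMono_iff_lt_succ.2 fun i => (hφ i).1).injective

lemma HasMonPathTo.snoc {m : ℕ} {u v : Fin n} (h : HasMonPathTo χ j m u) (huv : u < v)
    (hc : χ u v = j) : HasMonPathTo χ j (m + 1) v := by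
  obtain ⟨φ, rfl, hφ⟩ := h
  refine ⟨Fin.snoc (α := fun _ => Fin n) φ v, Fin.snoc_last _ _, fun i => ?_⟩
  induction i using Fin.lastCases with
  | last => simpa using ⟨huv, hc⟩
  | cast i => simpa only [Fin.succ_castSucc, Fin.snoc_castSucc] using hφ i

lemma bddAbove_setOf_hasMonPathTo (v : Fin n) : BddAbove {m | HasMonPathTo χ j m v} :=
  ⟨n, fun _ h => h.lt.le⟩

lemma hasMonPathTo_maxMonPathLen (v : Fin n) : HasMonPathTo χ j (maxMonPathLen χ j v) v :=
  Nat.sSup_mem ⟨0, hasMonPathTo_zero v⟩ (bddAbove_setOf_hasMonPathTo v)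

lemma maxMonPathLen_lt_maxMonPathLen {u v : Fin n} (huv : u < v) (hc : χ u v = j) :
    maxMonPathLen χ j u < maxMonPathLen χ j v :=
  le_csSup (bddAbove_setOf_hasMonPathTo v) ((hasMonPathTo_maxMonPathLen u).snoc huv hc)

lemma HasMonPathTo.containsOrd_monPath {b m : ℕ} {v : Fin n} (hχ : ∀ u v, χ u v = χ v u)
    (h : HasMonPathTo χ j m v) (hb : b ≤ m + 1) : ContainsOrd (monPath b) χ j := by
  obtain ⟨φ, -, hφ⟩ := h
  have step : ∀ u w : Fin b, (u : ℕ) + 1 = w →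
      χ (φ (Fin.castLE hb u)) (φ (Fin.castLE hb w)) = j := by
    intro u w huw
    have hu : (u : ℕ) < m := by omega
    convert (hφ ⟨u, hu⟩).2 using 3 <;> ext <;> simp [huw]
  refine ⟨φ ∘ Fin.castLE hb,
    (Fin.strictMono_iff_lt_succ.2 fun i => (hφ i).1).comp (Fin.strictMono_castLE hb), ?_⟩
  intro u w huw
  rcases monPath_adj.1 huw with h | h
  · exact step u w h
  · exact (hχ _ _).trans (step w u h)

end MonotonePaths

lemma containsOrd_of_le_card_monochromatic {a n k : ℕ} (H : SimpleGraph (Fin a))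
    {χ : Fin n → Fin n → Fin k} {j : Fin k} (hχ : ∀ u v, χ u v = χ v u)
    {s : Finset (Fin n)} (hs : a ≤ #s)
    (hsj : ∀ u ∈ s, ∀ v ∈ s, u < v → χ u v = j) : ContainsOrd H χ j := by
  set e := s.orderEmbOfCardLe hs
  refine ⟨e, e.strictMono, fun u v huv => ?_⟩
  have hmem := s.orderEmbOfCardLe_mem hs
  rcases lt_or_gt_of_ne (H.ne_of_adj huv) with h | h
  · exact hsj _ (hmem u) _ (hmem v) (e.strictMono h)
  · exact (hχ _ _).trans (hsj _ (hmem v) _ (hmem u) (e.strictMono h))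

theorem containsOrd_or_containsOrd_monPath {a b n : ℕ} (H : SimpleGraph (Fin a))
    {χ : Fin n → Fin n → Fin 2} (hχ : ∀ u v, χ u v = χ v u) (hn : (a - 1) * (b - 1) < n) :
    ContainsOrd H χ 0 ∨ ContainsOrd (monPath b) χ 1 := by
  by_cases hlong : ∃ v, b - 1 ≤ maxMonPathLen χ 1 v
  · obtain ⟨v, hv⟩ := hlong
    exact Or.inr ((hasMonPathTo_maxMonPathLen v).containsOrd_monPath hχ (by omega))
  push Not at hlong
  have hmaps : ∀ v ∈ (univ : Finset (Fin n)), maxMonPathLen χ 1 v ∈ range (b - 1) :=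
    fun v _ => mem_range.2 (hlong v)
  obtain ⟨y, -, hy⟩ := exists_lt_card_fiber_of_mul_lt_card_of_maps_to hmaps
    (by simpa [mul_comm] using hn)
  refine Or.inl <|
    containsOrd_of_le_card_monochromatic H hχ (Nat.le_of_pred_lt hy) fun u hu v hv huv => ?_
  simp only [mem_filter, mem_univ, true_and] at hu hv
  have hc : χ u v ≠ 1 := fun hc => (maxMonPathLen_lt_maxMonPathLen huv hc).ne (hu.trans hv.symm)
  omega

lemma SimpleGraph.Preconnected.apply_eq_of_adj {V β : Type*} {G : SimpleGraph V}
    (hG : G.Preconnected) {f : V → β} (hf : ∀ u v, G.Adj u v → f u = f v) (u v : V) :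
    f u = f v :=
  (hG u v).elim fun p => by
    induction p with
    | nil => rfl
    | cons h _ ih => exact (hf _ _ h).trans ih

def blockColoring (c : ℕ) {n : ℕ} (u v : Fin n) : Fin 2 :=
  if (u : ℕ) / c = v / c then 0 else 1

section BlockColoring

variable {c m n : ℕ}

lemma blockColoring_symm (u v : Fin n) : blockColoring c u v = blockColoring c v u := by
  simp only [blockColoring, eq_comm]

lemma blockColoring_eq_zero {u v : Fin n} : blockColoring c u v = 0 ↔ (u : ℕ) / c = v / c := by
  simp [blockColoring]

lemma blockColoring_eq_one {u v : Fin n} : blockColoring c u v = 1 ↔ (u : ℕ) / c ≠ v / c := by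
  simp [blockColoring]

theorem not_containsOrd_blockColoring_zero {a : ℕ} {H : SimpleGraph (Fin a)} (hH : H.Connected)
    (ha : c < a) (hn : n ≤ c * m) :
    ¬ ContainsOrd H (blockColoring c : Fin n → Fin n → Fin 2) 0 := by
  rintro ⟨φ, hφ, hadj⟩
  have hblock : ∀ u v, (φ u : ℕ) / c = φ v / c :=
    hH.preconnected.apply_eq_of_adj fun u v h => blockColoring_eq_zero.1 (hadj u v h)
  have hc : 0 < c := Nat.pos_of_mul_pos_right ((φ ⟨0, by omega⟩).pos.trans_le hn)
  have hinj : Function.Injective fun i => (⟨φ i % c, Nat.mod_lt _ hc⟩ : Fin c) := by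
    intro u v huv
    apply hφ.injective
    rw [Fin.ext_iff, ← Nat.div_add_mod (φ u) c, ← Nat.div_add_mod (φ v) c, hblock u v]
    simpa using huv
  exact ha.not_ge (by simpa using Fintype.card_le_of_injective _ hinj)

theorem not_containsOrd_monPath_blockColoring_one {b : ℕ} (hm : m < b) (hn : n ≤ c * m) :
    ¬ ContainsOrd (monPath b) (blockColoring c : Fin n → Fin n → Fin 2) 1 := by
  rintro ⟨φ, hφ, hadj⟩
  obtain ⟨b, rfl⟩ : ∃ b', b = b' + 1 := ⟨b - 1, by omega⟩
  have hblock :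
      StrictMono fun i => (⟨φ i / c, Nat.div_lt_of_lt_mul ((φ i).2.trans_le hn)⟩ : Fin m) :=
    by
    refine Fin.strictMono_iff_lt_succ.2 fun i => ?_
    have hne :=
      blockColoring_eq_one.1 (hadj i.castSucc i.succ (monPath_adj.2 (Or.inl (by simp))))
    exact Fin.mk_lt_mk.2 (lt_of_le_of_ne (Nat.div_le_div_right (hφ i.castSucc_lt_succ).le) hne)
  exact hm.not_ge (by simpa using Fintype.card_le_of_injective _ hblock.injective)

end BlockColoring

theorem stmt6 {a : ℕ} (H : SimpleGraph (Fin a)) (hH : H.Connected) (b : ℕ) (hb : 1 ≤ b) :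
    Rord2 H (monPath b) = 1 + (a - 1) * (b - 1) := by
  refine IsLeast.csInf_eq ⟨fun χ hχ => containsOrd_or_containsOrd_monPath H hχ (by omega),
    fun m hm => ?_⟩
  by_contra! hlt
  have ha : 0 < a := Fin.pos_iff_nonempty.2 hH.nonempty
  rcases hm (blockColoring (a - 1)) blockColoring_symm with h | h
  · exact not_containsOrd_blockColoring_zero hH (by omega) (by omega : m ≤ (a - 1) * (b - 1)) h
  · exact not_containsOrd_monPath_blockColoring_one (by omega : b - 1 < b) (by omega) h
end

section
/- Let H be a connected graph of order a. Then for any b ≥ 2, the cyclic Ramsey number of H versus the monotone cycle of order b satisfies R_cyc(H, C_b^mon) ≥ 1 + (a−1)(b−1). -/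
open SimpleGraph Finset

/- Auxiliary Ramsey machinery -/

def Mono2 {n : ℕ} (χ : Fin n → Fin n → Fin 2) (j : Fin 2) (s : Finset (Fin n)) : Prop :=
  ∀ u ∈ s, ∀ v ∈ s, u ≠ v → χ u v = j

def RProp (n a b : ℕ) : Prop :=
  ∀ χ : Fin n → Fin n → Fin 2, (∀ u v, χ u v = χ v u) →
    ∃ s : Finset (Fin n), (s.card = a ∧ Mono2 χ 0 s) ∨ (s.card = b ∧ Mono2 χ 1 s)

lemma sub_clique {n m a b : ℕ} (χ : Fin n → Fin n → Fin 2) (hsym : ∀ u v, χ u v = χ v u)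
    (A : Finset (Fin n)) (hm : m ≤ A.card) (hR : RProp m a b) :
    ∃ s : Finset (Fin n), s ⊆ A ∧
      ((s.card = a ∧ Mono2 χ 0 s) ∨ (s.card = b ∧ Mono2 χ 1 s)) := by
  obtain ⟨t, hts, htc⟩ := Finset.exists_subset_card_eq hm
  set f := t.orderEmbOfFin htc with hf
  obtain ⟨s', hs'⟩ := hR (fun i j => χ (f i) (f j)) (fun u v => hsym _ _)
  refine ⟨s'.image f, ?_, ?_⟩
  · intro x hx
    simp only [mem_image] at hx
    obtain ⟨i, _, rfl⟩ := hx
    exact hts (t.orderEmbOfFin_mem htc i)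
  · have hinj : Function.Injective f := f.injective
    have hcard : (s'.image f).card = s'.card := Finset.card_image_of_injective _ hinj
    have hmono : ∀ j : Fin 2, Mono2 (fun i j => χ (f i) (f j)) j s' →
        Mono2 χ j (s'.image f) := by
      intro j hj u hu v hv huv
      simp only [mem_image] at hu hv
      obtain ⟨i1, hi1, rfl⟩ := hu
      obtain ⟨i2, hi2, rfl⟩ := hv
      exact hj i1 hi1 i2 hi2 (fun h => huv (by rw [h]))
    rcases hs' with ⟨h1, h2⟩ | ⟨h1, h2⟩
    · exact Or.inl ⟨hcard.trans h1, hmono 0 h2⟩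
    · exact Or.inr ⟨hcard.trans h1, hmono 1 h2⟩

lemma insert_clique {n : ℕ} (χ : Fin n → Fin n → Fin 2) (hsym : ∀ u v, χ u v = χ v u)
    (v0 : Fin n) (j : Fin 2) (s : Finset (Fin n)) (hm : Mono2 χ j s)
    (hadj : ∀ x ∈ s, x ≠ v0 ∧ χ x v0 = j) :
    Mono2 χ j (insert v0 s) ∧ (insert v0 s).card = s.card + 1 := by
  constructor
  · intro u hu v hv huv
    rcases Finset.mem_insert.1 hu with hu' | hu'
    · rcases Finset.mem_insert.1 hv with hv' | hv'
      · exact absurd (hu'.trans hv'.symm) huv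
      · rw [hu', hsym]; exact (hadj v hv').2
    · rcases Finset.mem_insert.1 hv with hv' | hv'
      · rw [hv']; exact (hadj u hu').2
      · exact hm u hu' v hv' huv
  · rw [Finset.card_insert_of_notMem fun h => (hadj v0 h).1 rfl]

lemma ramsey_exists : ∀ c a b : ℕ, a + b ≤ c → ∃ n, RProp n a b := by
  intro c
  induction c with
  | zero =>
    intro a b h
    refine ⟨0, fun χ hsym => ⟨∅, Or.inl ⟨?_, fun u hu => by simp at hu⟩⟩⟩
    simp; omega
  | succ c ih =>
    intro a b hab
    rcases Nat.eq_zero_or_pos a with rfl | ha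
    · exact ⟨0, fun χ hsym => ⟨∅, Or.inl ⟨by simp, fun u hu => by simp at hu⟩⟩⟩
    rcases Nat.eq_zero_or_pos b with rfl | hb
    · exact ⟨0, fun χ hsym => ⟨∅, Or.inr ⟨by simp, fun u hu => by simp at hu⟩⟩⟩
    obtain ⟨a', rfl⟩ := Nat.exists_eq_add_of_le ha
    obtain ⟨b', rfl⟩ := Nat.exists_eq_add_of_le hb
    obtain ⟨n1, h1⟩ := ih a' (1 + b') (by omega)
    obtain ⟨n2, h2⟩ := ih (1 + a') b' (by omega)
    refine ⟨n1 + n2 + 1, fun χ hsym => ?_⟩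
    set v0 : Fin (n1 + n2 + 1) := ⟨n1 + n2, by omega⟩ with hv0
    set A : Finset (Fin (n1 + n2 + 1)) := univ.filter (fun x => x ≠ v0 ∧ χ x v0 = 0) with hA
    set B : Finset (Fin (n1 + n2 + 1)) := univ.filter (fun x => x ≠ v0 ∧ χ x v0 ≠ 0) with hB
    have hcases : n1 ≤ A.card ∨ n2 ≤ B.card := by
      by_contra hcon
      push_neg at hcon
      have hsub : univ.erase v0 ⊆ A ∪ B := by
        intro x hx
        have hx' : x ≠ v0 := (Finset.mem_erase.1 hx).1
        rcases eq_or_ne (χ x v0) 0 with h0 | h0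
        · exact Finset.mem_union_left _ (by simp [hA, hx', h0])
        · exact Finset.mem_union_right _ (by simp [hB, hx', h0])
      have hc1 : (univ.erase v0).card = n1 + n2 := by
        rw [Finset.card_erase_of_mem (mem_univ _)]
        simp
      have := (Finset.card_le_card hsub).trans (Finset.card_union_le A B)
      omega
    rcases hcases with hc | hc
    · obtain ⟨s, hsA, hs⟩ := sub_clique χ hsym A hc h1
      rcases hs with ⟨hcard, hmono⟩ | ⟨hcard, hmono⟩
      · have hadj : ∀ x ∈ s, x ≠ v0 ∧ χ x v0 = 0 := by
          intro x hx
          have := hsA hx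
          simp [hA] at this
          exact this
        obtain ⟨hm', hc'⟩ := insert_clique χ hsym v0 0 s hmono hadj
        exact ⟨insert v0 s, Or.inl ⟨by omega, hm'⟩⟩
      · exact ⟨s, Or.inr ⟨hcard, hmono⟩⟩
    · obtain ⟨s, hsB, hs⟩ := sub_clique χ hsym B hc h2
      rcases hs with ⟨hcard, hmono⟩ | ⟨hcard, hmono⟩
      · exact ⟨s, Or.inl ⟨hcard, hmono⟩⟩
      · have hadj : ∀ x ∈ s, x ≠ v0 ∧ χ x v0 = 1 := by
          intro x hx
          have := hsB hx
          simp [hB] at this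
          exact ⟨this.1, by omega⟩
        obtain ⟨hm', hc'⟩ := insert_clique χ hsym v0 1 s hmono hadj
        exact ⟨insert v0 s, Or.inr ⟨by omega, hm'⟩⟩

lemma aux_mem_set {a b n : ℕ} (H1 : SimpleGraph (Fin a)) (H2 : SimpleGraph (Fin b))
    (ha : 0 < a) (hb : 0 < b) (hR : RProp n a b)
    (χ : Fin n → Fin n → Fin 2) (hsym : ∀ u v, χ u v = χ v u) :
    ContainsCyc H1 χ 0 ∨ ContainsCyc H2 χ 1 := by
  obtain ⟨s, hs⟩ := hR χ hsym
  rcases hs with ⟨hcard, hmono⟩ | ⟨hcard, hmono⟩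
  · left
    set φ := s.orderEmbOfFin hcard with hφ
    refine ⟨fun i => φ i, ⟨⟨0, ha⟩, ?_⟩, ?_⟩
    · have h0 : ∀ i : Fin a, i + (⟨0, ha⟩ : Fin a) = i := by
        intro i; apply Fin.ext; rw [Fin.val_add]; simp [Nat.mod_eq_of_lt i.isLt]
      simp only [h0]; exact φ.strictMono
    · intro u v huv
      exact hmono _ (s.orderEmbOfFin_mem hcard u) _ (s.orderEmbOfFin_mem hcard v)
        (fun h => huv.ne (φ.injective h))
  · right
    set φ := s.orderEmbOfFin hcard with hφ
    refine ⟨fun i => φ i, ⟨⟨0, hb⟩, ?_⟩, ?_⟩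
    · have h0 : ∀ i : Fin b, i + (⟨0, hb⟩ : Fin b) = i := by
        intro i; apply Fin.ext; rw [Fin.val_add]; simp [Nat.mod_eq_of_lt i.isLt]
      simp only [h0]; exact φ.strictMono
    · intro u v huv
      exact hmono _ (s.orderEmbOfFin_mem hcard u) _ (s.orderEmbOfFin_mem hcard v)
        (fun h => huv.ne (φ.injective h))

lemma notMem_small {a b m : ℕ} (H : SimpleGraph (Fin a)) (hH : H.Connected) (hb : 2 ≤ b)
    (hm : m ≤ (a - 1) * (b - 1)) :
    ∃ χ : Fin m → Fin m → Fin 2, (∀ u v, χ u v = χ v u) ∧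
      ¬ContainsCyc H χ 0 ∧ ¬ContainsCyc (monCycle b) χ 1 := by
  have ha : 0 < a := Fin.pos_iff_nonempty.2 hH.nonempty
  rcases Nat.eq_zero_or_pos m with rfl | hmpos
  · refine ⟨fun _ _ => 0, fun _ _ => rfl, ?_, ?_⟩
    · rintro ⟨φ, -, -⟩; exact (φ ⟨0, ha⟩).elim0
    · rintro ⟨φ, -, -⟩; exact (φ ⟨0, by omega⟩).elim0
  have hd : 0 < a - 1 := by
    rcases Nat.eq_zero_or_pos (a - 1) with h | h
    · rw [h, Nat.zero_mul] at hm; omega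
    · exact h
  set d := a - 1 with hdd
  refine ⟨fun x y => if (x : ℕ) / d = (y : ℕ) / d then 0 else 1, ?_, ?_, ?_⟩
  · intro u v
    dsimp only
    rcases eq_or_ne ((u : ℕ) / d) ((v : ℕ) / d) with h | h
    · rw [if_pos h, if_pos h.symm]
    · rw [if_neg h, if_neg (Ne.symm h)]
  · rintro ⟨φ, ⟨t, hmono⟩, hedge⟩
    haveI : NeZero a := ⟨by omega⟩
    have hinj : Function.Injective φ := by
      intro x y hxy
      have h1 : x - t = y - t := hmono.injective (show φ (x - t + t) = φ (y - t + t) by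
        rw [sub_add_cancel, sub_add_cancel]; exact hxy)
      have := congrArg (· + t) h1
      simpa [sub_add_cancel] using this
    have hblk : ∀ u v : Fin a, H.Adj u v → (φ u : ℕ) / d = (φ v : ℕ) / d := by
      intro u v huv
      have he := hedge u v huv
      by_contra hne
      dsimp only at he
      rw [if_neg hne] at he
      exact one_ne_zero he
    have hconst : ∀ u v : Fin a, (φ u : ℕ) / d = (φ v : ℕ) / d := by
      intro u v
      obtain ⟨w⟩ := hH.preconnected u v
      induction w with
      | nil => rfl
      | cons h p ih => exact (hblk _ _ h).trans ih
    set c := (φ ⟨0, ha⟩ : ℕ) / d with hc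
    have hmap : ∀ x : Fin a, (φ x : ℕ) ∈ Finset.Ico (c * d) (c * d + d) := by
      intro x
      have hx : (φ x : ℕ) / d = c := hconst x ⟨0, ha⟩
      rw [Finset.mem_Ico]
      constructor
      · calc c * d = (φ x : ℕ) / d * d := by rw [hx]
          _ ≤ (φ x : ℕ) := Nat.div_mul_le_self _ _
      · have h1 : (φ x : ℕ) / d < c + 1 := by omega
        have h2 := (Nat.div_lt_iff_lt_mul hd).mp h1
        calc (φ x : ℕ) < (c + 1) * d := h2
          _ = c * d + d := by ring
    have hcard : (Finset.univ : Finset (Fin a)).card ≤ (Finset.Ico (c * d) (c * d + d)).card :=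
      Finset.card_le_card_of_injOn (fun x : Fin a => (φ x : ℕ))
        (fun x _ => hmap x) (fun x _ y _ h => hinj (Fin.val_injective h))
    rw [Finset.card_univ, Fintype.card_fin, Nat.card_Ico] at hcard
    omega
  · rintro ⟨φ, ⟨t, hmono⟩, hedge⟩
    haveI : NeZero b := ⟨by omega⟩
    have hone : ((1 : Fin b) : ℕ) = 1 := by
      rw [Fin.val_one']; exact Nat.mod_eq_of_lt (by omega)
    have hadj_succ : ∀ u : Fin b, (monCycle b).Adj u (u + 1) := by
      intro u
      have hv : ((u + 1 : Fin b) : ℕ) = (u.val + 1) % b := by rw [Fin.val_add, hone]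
      simp only [monCycle, SimpleGraph.fromRel_adj]
      rcases Nat.lt_or_ge (u.val + 1) b with hcase | hcase
      · have hv' : ((u + 1 : Fin b) : ℕ) = u.val + 1 := by rw [hv, Nat.mod_eq_of_lt hcase]
        exact ⟨Fin.ne_of_val_ne (by omega), Or.inl (Or.inl (by omega))⟩
      · have heq : u.val + 1 = b := by have := u.isLt; omega
        have hv' : ((u + 1 : Fin b) : ℕ) = 0 := by rw [hv, heq, Nat.mod_self]
        exact ⟨Fin.ne_of_val_ne (by omega), Or.inr (Or.inr ⟨by omega, by omega⟩)⟩
    have key : ∀ i : ℕ, ∀ h : i < b, i ≤ (φ ((⟨i, h⟩ : Fin b) + t) : ℕ) / d := by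
      intro i
      induction i with
      | zero => intro h; exact Nat.zero_le _
      | succ i ih =>
        intro h
        have hi : i < b := by omega
        have h1 := ih hi
        have hlt : φ ((⟨i, hi⟩ : Fin b) + t) < φ ((⟨i + 1, h⟩ : Fin b) + t) :=
          hmono (show (⟨i, hi⟩ : Fin b) < ⟨i + 1, h⟩ by simp [Fin.lt_def])
        have hle : (φ ((⟨i, hi⟩ : Fin b) + t) : ℕ) / d ≤ (φ ((⟨i + 1, h⟩ : Fin b) + t) : ℕ) / d :=
          Nat.div_le_div_right (le_of_lt (Fin.lt_def.mp hlt))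
        have hsucc : (⟨i + 1, h⟩ : Fin b) = (⟨i, hi⟩ : Fin b) + 1 := by
          apply Fin.ext; rw [Fin.val_add, hone]; exact (Nat.mod_eq_of_lt h).symm
        have hcomm : ((⟨i, hi⟩ : Fin b) + t) + 1 = (⟨i + 1, h⟩ : Fin b) + t := by
          rw [hsucc, add_right_comm]
        have he := hedge _ _ (hadj_succ ((⟨i, hi⟩ : Fin b) + t))
        rw [hcomm] at he
        have hne : (φ ((⟨i, hi⟩ : Fin b) + t) : ℕ) / d ≠ (φ ((⟨i + 1, h⟩ : Fin b) + t) : ℕ) / d := by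
          intro hceq
          dsimp only at he
          rw [if_pos hceq] at he
          exact zero_ne_one he
        omega
    have hfin := key (b - 1) (by omega)
    have hsmall : ∀ x : Fin m, (x : ℕ) / d < b - 1 := by
      intro x
      rw [Nat.div_lt_iff_lt_mul hd]
      calc (x : ℕ) < m := x.isLt
        _ ≤ (b - 1) * d := by rw [mul_comm]; exact hm
    have := hsmall (φ ((⟨b - 1, by omega⟩ : Fin b) + t))
    omega

theorem stmt8 {a : ℕ} (H : SimpleGraph (Fin a)) (hH : H.Connected) (b : ℕ) (hb : 2 ≤ b) :
    1 + (a - 1) * (b - 1) ≤ Rcyc2 H (monCycle b) := by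
  have ha : 0 < a := Fin.pos_iff_nonempty.2 hH.nonempty
  obtain ⟨n, hR⟩ := ramsey_exists (a + b) a b le_rfl
  rw [Rcyc2]
  refine le_csInf ⟨n, fun χ hsym => aux_mem_set H (monCycle b) ha (by omega) hR χ hsym⟩ ?_
  intro m hmem
  by_contra hlt
  push_neg at hlt
  obtain ⟨χ, hsym, h0, h1⟩ := notMem_small H hH hb (show m ≤ (a - 1) * (b - 1) by omega)
  rcases hmem χ hsym with h | h
  · exact h0 h
  · exact h1 h
end

section
/- For any a, b ∈ ℕ, the cyclic Ramsey number of the complete graph of order a versus the monotone path of order b equals 1 + (a−1)(b−1). -/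
open SimpleGraph Finset

/-! ### Auxiliary machinery -/

def chainLen (g : ℕ → ℕ → Fin 2) : ℕ → ℕ
  | v => 1 + (((Finset.range v).filter (fun u => g u v = 1)).attach).sup (fun u => chainLen g u.1)
decreasing_by exact Finset.mem_range.1 (Finset.mem_filter.1 u.2).1

lemma one_le_chainLen (g : ℕ → ℕ → Fin 2) (v : ℕ) : 1 ≤ chainLen g v := by
  rw [chainLen]; omega

lemma lt_chainLen {g : ℕ → ℕ → Fin 2} {u v : ℕ} (h : u < v) (hb : g u v = 1) :
    chainLen g u < chainLen g v := by
  conv_rhs => rw [chainLen]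
  have hm : u ∈ (Finset.range v).filter (fun u => g u v = 1) := by
    simp [Finset.mem_filter, h, hb]
  have := Finset.le_sup (f := fun x : {x // x ∈ (Finset.range v).filter (fun u => g u v = 1)} => chainLen g x.1) (Finset.mem_attach _ ⟨u, hm⟩)
  simp only [] at this
  omega

lemma chainLen_spec (g : ℕ → ℕ → Fin 2) : ∀ v : ℕ, ∃ φ : ℕ → ℕ,
    (∀ i j, i < j → j < chainLen g v → φ i < φ j) ∧
    φ (chainLen g v - 1) = v ∧
    (∀ i, i + 1 < chainLen g v → g (φ i) (φ (i+1)) = 1) := by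
  intro v
  induction v using Nat.strong_induction_on with
  | _ v ih =>
    by_cases hs : ((Finset.range v).filter (fun u => g u v = 1)).Nonempty
    · obtain ⟨u, hu, hsup⟩ := Finset.exists_mem_eq_sup
        ((Finset.range v).filter (fun u => g u v = 1)).attach (hs.attach)
        (fun x => chainLen g x.1)
      have huv : u.1 < v := Finset.mem_range.1 (Finset.mem_filter.1 u.2).1
      have hbu : g u.1 v = 1 := (Finset.mem_filter.1 u.2).2
      have hL : chainLen g v = chainLen g u.1 + 1 := by
        rw [chainLen]; omega
      obtain ⟨φ', h1, h2, h3⟩ := ih u.1 huv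
      set L := chainLen g u.1 with hLu
      have hL1 : 1 ≤ L := one_le_chainLen g u.1
      refine ⟨fun i => if i < L then φ' i else v, ?_, ?_, ?_⟩
      · intro i j hij hj
        rw [hL] at hj
        by_cases hjL : j < L
        · simp only [if_pos hjL, if_pos (lt_trans hij hjL)]
          exact h1 i j hij hjL
        · have hjeq : j = L := by omega
          have hiL : i < L := by omega
          simp only [if_pos hiL, if_neg (by omega : ¬ j < L)]
          have : φ' i ≤ u.1 := by
            rcases lt_or_eq_of_le (by omega : i ≤ L - 1) with h | h
            · exact le_of_lt (h2 ▸ h1 i (L-1) h (by omega))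
            · rw [h, h2]
          omega
      · rw [hL]
        simp only [Nat.add_sub_cancel, if_neg (lt_irrefl L)]
      · intro i hi
        rw [hL] at hi
        by_cases hiL : i + 1 < L
        · simp only [if_pos hiL, if_pos (by omega : i < L)]
          exact h3 i hiL
        · have : i + 1 = L := by omega
          have hieq : i = L - 1 := by omega
          simp only [if_pos (by omega : i < L), if_neg (by omega : ¬ i + 1 < L)]
          rw [hieq, h2]
          exact hbu
    · have hL : chainLen g v = 1 := by
        rw [chainLen, Finset.not_nonempty_iff_eq_empty.1 hs]
        simp
      exact ⟨fun _ => v, fun i j hij hj => by omega, by rw [hL], fun i hi => by omega⟩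

lemma containsCyc_of_ord {m n k : ℕ} {H : SimpleGraph (Fin m)} (hm : 0 < m)
    {χ : Fin n → Fin n → Fin k} {j : Fin k} (h : ContainsOrd H χ j) :
    ContainsCyc H χ j := by
  obtain ⟨φ, hmono, hcol⟩ := h
  refine ⟨φ, ⟨⟨0, hm⟩, ?_⟩, hcol⟩
  have hz : ∀ i : Fin m, i + (⟨0, hm⟩ : Fin m) = i := by
    intro i; apply Fin.ext; simp [Fin.add_def, Nat.mod_eq_of_lt i.isLt]
  simpa [hz] using hmono

lemma fin_two_ne_one {c : Fin 2} (h : c ≠ 1) : c = 0 := by omega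

lemma upper_mem_s12 (a b N : ℕ) (ha : 1 ≤ a) (hb : 1 ≤ b) (hn : (a-1)*(b-1) < N)
    (χ : Fin N → Fin N → Fin 2)
    (hsym : ∀ u v, χ u v = χ v u) :
    ContainsOrd (⊤ : SimpleGraph (Fin a)) χ 0 ∨ ContainsOrd (monPath b) χ 1 := by
  set g : ℕ → ℕ → Fin 2 := fun u v =>
    if h : u < N ∧ v < N then χ ⟨u, h.1⟩ ⟨v, h.2⟩ else 0 with hg
  by_cases hcase : ∃ v : Fin N, b ≤ chainLen g v.1
  · -- blue monotone path
    right
    obtain ⟨v, hv⟩ := hcase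
    obtain ⟨φ, h1, h2, h3⟩ := chainLen_spec g v.1
    set L := chainLen g v.1 with hLdef
    have hbound : ∀ i, i < L → φ i < N := by
      intro i hi
      have : φ i ≤ v.1 := by
        rcases lt_or_eq_of_le (by omega : i ≤ L - 1) with h | h
        · exact le_of_lt (h2 ▸ h1 i (L-1) h (by omega))
        · rw [h, h2]
      omega
    refine ⟨fun i => ⟨φ i.1, hbound i.1 (by omega)⟩, ?_, ?_⟩
    · intro i j hij
      exact Fin.mk_lt_mk.2 (h1 i.1 j.1 hij (by omega))
    · intro u w hadj
      rw [monPath, SimpleGraph.fromRel_adj] at hadj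
      obtain ⟨hne, hrel⟩ := hadj
      have key : ∀ (x y : Fin N) (i : ℕ), i + 1 < b → x.1 = φ i → y.1 = φ (i+1) →
          χ x y = 1 := by
        intro x y i hib hx hy
        have hth := h3 i (by omega)
        simp only [hg] at hth
        rw [dif_pos (show φ i < N ∧ φ (i+1) < N from
          ⟨hbound i (by omega), hbound (i+1) (by omega)⟩)] at hth
        have hx' : x = (⟨φ i, hbound i (by omega)⟩ : Fin N) := Fin.ext hx
        have hy' : y = (⟨φ (i+1), hbound (i+1) (by omega)⟩ : Fin N) := Fin.ext hy
        rw [hx', hy']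
        exact hth
      rcases hrel with h | h
      · have hw : w.1 = u.1 + 1 := by omega
        have hu1 : u.1 + 1 < b := hw ▸ w.isLt
        refine key ⟨φ u.1, hbound u.1 (by omega)⟩ ⟨φ w.1, hbound w.1 (by omega)⟩
          u.1 hu1 rfl ?_
        show φ w.1 = φ (u.1+1)
        rw [hw]
      · have hw : u.1 = w.1 + 1 := by omega
        have hw1 : w.1 + 1 < b := hw ▸ u.isLt
        rw [hsym]
        refine key ⟨φ w.1, hbound w.1 (by omega)⟩ ⟨φ u.1, hbound u.1 (by omega)⟩
          w.1 hw1 rfl ?_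
        show φ u.1 = φ (w.1+1)
        rw [hw]
  · -- red clique via pigeonhole
    left
    push_neg at hcase
    have hchain : ∀ v : Fin N, chainLen g v.1 ≤ b - 1 := by
      intro v; have := hcase v; omega
    have hb2 : 2 ≤ b := by
      have := one_le_chainLen g (⟨0, by omega⟩ : Fin N).1
      have := hchain ⟨0, by omega⟩
      omega
    have hmaps : ∀ v : Fin N, v ∈ Finset.univ →
        (chainLen g v.1 - 1) ∈ Finset.range (b-1) := by
      intro v _
      have h1 := one_le_chainLen g v.1
      have h2 := hchain v
      simp only [Finset.mem_range]
      omega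
    have hcardlt : (Finset.range (b-1)).card * (a-1) < (Finset.univ : Finset (Fin N)).card := by
      simp only [Finset.card_range, Finset.card_univ, Fintype.card_fin]
      rw [mul_comm] at hn
      omega
    obtain ⟨y, _, hy⟩ := Finset.exists_lt_card_fiber_of_mul_lt_card_of_maps_to hmaps hcardlt
    have hacard : a ≤ (Finset.univ.filter (fun x : Fin N => chainLen g x.1 - 1 = y)).card := by
      omega
    obtain ⟨t, hts, htcard⟩ := Finset.exists_subset_card_eq hacard
    set e := t.orderIsoOfFin htcard with he
    refine ⟨fun i => (e i : Fin N), ?_, ?_⟩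
    · intro i j hij
      exact e.strictMono hij
    · intro u w hadj
      have hne : u ≠ w := hadj.ne
      have hchainEq : ∀ x : Fin a, chainLen g ((e x : Fin N)).1 = y + 1 := by
        intro x
        have hxm : (e x : Fin N) ∈ t := (e x).2
        have := Finset.mem_filter.1 (hts hxm)
        have h1 := one_le_chainLen g ((e x : Fin N)).1
        omega
      have hinj : (e u : Fin N) ≠ (e w : Fin N) := by
        intro hc
        exact hne (e.injective (Subtype.ext hc))
      have hred : ∀ x y' : Fin N, x.1 < y'.1 →
          chainLen g x.1 = chainLen g y'.1 → χ x y' = 0 := by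
        intro x y' hxy hcl
        apply fin_two_ne_one
        intro hc
        have : g x.1 y'.1 = 1 := by
          simp only [hg]
          rw [dif_pos (show x.1 < N ∧ y'.1 < N from ⟨x.isLt, y'.isLt⟩)]
          simpa using hc
        have := lt_chainLen hxy this
        omega
      show χ (e u : Fin N) (e w : Fin N) = 0
      rcases lt_trichotomy ((e u : Fin N)) ((e w : Fin N)) with h | h | h
      · exact hred _ _ h (by rw [hchainEq, hchainEq])
      · exact absurd h hinj
      · rw [hsym]
        exact hred _ _ h (by rw [hchainEq, hchainEq])

lemma fin_sub_add_cancel {m : ℕ} (x t : Fin m) : x - t + t = x := by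
  apply Fin.ext
  simp only [Fin.sub_def, Fin.add_def]
  rw [Nat.mod_add_mod]
  have h : m - t.1 + x.1 + t.1 = m + x.1 := by have := t.isLt; omega
  rw [h, Nat.add_mod_left, Nat.mod_eq_of_lt x.isLt]

lemma inj_of_shift {m n : ℕ} {φ : Fin m → Fin n} {t : Fin m}
    (h : StrictMono fun i => φ (i + t)) : Function.Injective φ := by
  intro x y hxy
  have hx : φ ((x - t) + t) = φ ((y - t) + t) := by
    rw [fin_sub_add_cancel, fin_sub_add_cancel]; exact hxy
  have h2 := h.injective hx
  have h3 := congrArg (· + t) h2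
  simpa [fin_sub_add_cancel] using h3

lemma lower_no (a b n : ℕ) (ha : 1 ≤ a) (hb : 1 ≤ b) (hn : n ≤ (a-1)*(b-1)) :
    ∃ χ : Fin n → Fin n → Fin 2, (∀ u v, χ u v = χ v u) ∧
      ¬ ContainsCyc (⊤ : SimpleGraph (Fin a)) χ 0 ∧ ¬ ContainsCyc (monPath b) χ 1 := by
  rcases Nat.eq_zero_or_pos n with hn0 | hn0
  · subst hn0
    refine ⟨fun u _ => 0, fun u v => rfl, ?_, ?_⟩
    · rintro ⟨φ, -, -⟩
      exact (φ ⟨0, ha⟩).elim0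
    · rintro ⟨φ, -, -⟩
      exact (φ ⟨0, hb⟩).elim0
  have ha2 : 2 ≤ a := by
    by_contra h
    have : a - 1 = 0 := by omega
    rw [this, zero_mul] at hn; omega
  have hb2 : 2 ≤ b := by
    by_contra h
    have : b - 1 = 0 := by omega
    rw [this, mul_zero] at hn; omega
  have hbpos : 0 < b - 1 := by omega
  refine ⟨fun u v => if (u:ℕ)/(b-1) = (v:ℕ)/(b-1) then 1 else 0, ?_, ?_, ?_⟩
  · intro u v
    show (if (u:ℕ)/(b-1) = (v:ℕ)/(b-1) then (1:Fin 2) else 0) =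
      (if (v:ℕ)/(b-1) = (u:ℕ)/(b-1) then (1:Fin 2) else 0)
    by_cases h : (u:ℕ)/(b-1) = (v:ℕ)/(b-1)
    · rw [if_pos h, if_pos h.symm]
    · rw [if_neg h, if_neg (fun hc => h hc.symm)]
  · rintro ⟨φ, ⟨t, hmono⟩, hcol⟩
    have hq : ∀ u : Fin a, (φ u : ℕ) / (b-1) < a - 1 := by
      intro u
      have h1 : (φ u : ℕ) < (a-1)*(b-1) := lt_of_lt_of_le (φ u).isLt hn
      exact (Nat.div_lt_iff_lt_mul hbpos).2 h1
    have hqinj : Function.Injective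
        (fun u : Fin a => (⟨(φ u : ℕ)/(b-1), hq u⟩ : Fin (a-1))) := by
      intro x y hxy
      by_contra hne
      have hadj : (⊤ : SimpleGraph (Fin a)).Adj x y := by simpa using hne
      have hc := hcol x y hadj
      simp only [] at hc
      have heq : (φ x : ℕ)/(b-1) = (φ y : ℕ)/(b-1) := congrArg Fin.val hxy
      rw [if_pos heq] at hc
      simp at hc
    have hcard := Fintype.card_le_of_injective _ hqinj
    simp only [Fintype.card_fin] at hcard
    omega
  · rintro ⟨φ, ⟨t, hmono⟩, hcol⟩
    have hinj : Function.Injective φ := inj_of_shift hmono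
    have hsame : ∀ i : ℕ, (hi : i < b) →
        (φ ⟨i, hi⟩ : ℕ)/(b-1) = (φ ⟨0, by omega⟩ : ℕ)/(b-1) := by
      intro i
      induction i with
      | zero => intro hi; rfl
      | succ k ihk =>
        intro hi
        have hk : k < b := by omega
        have hadj : (monPath b).Adj ⟨k, hk⟩ ⟨k+1, hi⟩ := by
          rw [monPath, SimpleGraph.fromRel_adj]
          refine ⟨?_, Or.inl rfl⟩
          intro hc
          have := congrArg Fin.val hc
          simp at this
        have hc := hcol _ _ hadj
        simp only [] at hc
        have hcond : (φ ⟨k,hk⟩ : ℕ)/(b-1) = (φ ⟨k+1,hi⟩ : ℕ)/(b-1) := by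
          by_contra hcc
          rw [if_neg hcc] at hc
          simp at hc
        rw [← hcond]
        exact ihk hk
    have hminj : Function.Injective
        (fun u : Fin b => (⟨(φ u : ℕ) % (b-1), Nat.mod_lt _ hbpos⟩ : Fin (b-1))) := by
      intro x y hxy
      have hmod : (φ x : ℕ) % (b-1) = (φ y : ℕ) % (b-1) := congrArg Fin.val hxy
      have hdx := hsame x.1 x.isLt
      have hdy := hsame y.1 y.isLt
      simp only [Fin.eta] at hdx hdy
      have hdiv : (φ x : ℕ)/(b-1) = (φ y : ℕ)/(b-1) := by rw [hdx, hdy]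
      have hXd := Nat.div_add_mod (φ x : ℕ) (b-1)
      have hYd := Nat.div_add_mod (φ y : ℕ) (b-1)
      rw [hdiv, hmod] at hXd
      have hval : (φ x : ℕ) = (φ y : ℕ) := by omega
      exact hinj (Fin.ext hval)
    have hcard := Fintype.card_le_of_injective _ hminj
    simp only [Fintype.card_fin] at hcard
    omega

theorem stmt12 (a b : ℕ) (ha : 1 ≤ a) (hb : 1 ≤ b) :
    Rcyc2 (⊤ : SimpleGraph (Fin a)) (monPath b) = 1 + (a - 1) * (b - 1) := by
  rw [Rcyc2]
  set S : Set ℕ := {n | ∀ χ : Fin n → Fin n → Fin 2, (∀ u v, χ u v = χ v u) →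
    ContainsCyc (⊤ : SimpleGraph (Fin a)) χ 0 ∨ ContainsCyc (monPath b) χ 1} with hS
  have hNmem : 1 + (a-1)*(b-1) ∈ S := by
    intro χ hsym
    rcases upper_mem_s12 a b _ ha hb (by omega) χ hsym with h | h
    · exact Or.inl (containsCyc_of_ord ha h)
    · exact Or.inr (containsCyc_of_ord hb h)
  have hne : S.Nonempty := ⟨_, hNmem⟩
  have hmem := Nat.sInf_mem hne
  refine le_antisymm (Nat.sInf_le hNmem) ?_
  by_contra hlt
  push_neg at hlt
  have hle : sInf S ≤ (a-1)*(b-1) := by omega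
  obtain ⟨χ, hsym, h1, h2⟩ := lower_no a b (sInf S) ha hb hle
  rcases hmem χ hsym with h | h
  · exact h1 h
  · exact h2 h
end

section
/- For any a, b ∈ ℕ, the ordered Ramsey number of the complete graph of order a versus the start-central star of order b equals 1 + (a−1)(b−1). -/
open SimpleGraph Finset

private lemma fin2_eq_zero (x : Fin 2) (h : x ≠ 1) : x = 0 := by fin_cases x <;> simp_all

private lemma key_upper (b : ℕ) (hb : 1 ≤ b) :
    ∀ a n, 1 + (a - 1) * (b - 1) ≤ n → ∀ χ : Fin n → Fin n → Fin 2,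
      (∀ u v, χ u v = χ v u) →
      ContainsOrd (⊤ : SimpleGraph (Fin a)) χ 0 ∨ ContainsOrd (starSC b) χ 1 := by
  intro a
  induction a with
  | zero =>
    intro n _ χ _
    exact Or.inl ⟨Fin.elim0, fun i => i.elim0, fun u => u.elim0⟩
  | succ a ih =>
    intro n hn χ hsym
    have hn' : 1 + a * (b - 1) ≤ n := by simpa using hn
    rcases Nat.eq_or_lt_of_le hb with hb1 | hb2
    · -- b = 1 : the star is edgeless
      right
      refine ⟨fun _ => ⟨0, by omega⟩, ?_, ?_⟩
      · intro i j hij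
        rw [Fin.lt_def] at hij
        have hi := i.isLt; have hj := j.isLt
        omega
      · intro u v huv
        rw [starSC, SimpleGraph.fromRel_adj] at huv
        have hu := u.isLt; have hv := v.isLt
        exact absurd (Fin.ext (by omega)) huv.1
    · by_cases ha0 : a = 0
      · -- a + 1 = 1 : K₁ is trivial
        subst ha0
        left
        refine ⟨fun _ => ⟨0, by omega⟩, ?_, ?_⟩
        · intro i j hij
          rw [Fin.lt_def] at hij
          have hi := i.isLt; have hj := j.isLt
          omega
        · intro u v huv
          have hu := u.isLt; have hv := v.isLt
          exact absurd (Fin.ext (by omega)) ((SimpleGraph.top_adj u v).mp huv)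
      -- main induction step, a ≥ 1, b ≥ 2
      have ha1 : 1 ≤ a := Nat.one_le_iff_ne_zero.mpr ha0
      have hmul : a * (b - 1) = (a - 1) * (b - 1) + (b - 1) := by
        cases a with
        | zero => omega
        | succ a' => simp [Nat.succ_mul, Nat.succ_sub_one]
      have hb1le : b - 1 ≤ a * (b - 1) := by
        calc b - 1 = 1 * (b - 1) := (one_mul _).symm
        _ ≤ a * (b - 1) := Nat.mul_le_mul_right _ ha1
      have hn2 : 2 ≤ n := by omega
      set z : Fin n := ⟨0, by omega⟩ with hz
      set B : Finset (Fin n) := Finset.univ.filter (fun v => v ≠ z) with hB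
      have hBcard : B.card = n - 1 := by
        rw [hB, Finset.filter_ne', Finset.card_erase_of_mem (Finset.mem_univ z)]
        simp
      set T : Finset (Fin n) := B.filter (fun v => χ z v = 1) with hT
      set A : Finset (Fin n) := B.filter (fun v => ¬ (χ z v = 1)) with hA
      have hTA : T.card + A.card = n - 1 := by
        rw [hT, hA, Finset.card_filter_add_card_filter_not, hBcard]
      by_cases hTb : b - 1 ≤ T.card
      · -- the star in color 1
        right
        obtain ⟨T', hT'sub, hT'card⟩ := Finset.exists_subset_card_eq hTb
        set e := T'.orderEmbOfFin hT'card with he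
        have hmem : ∀ j : Fin (b - 1), (e j) ∈ T := fun j =>
          hT'sub (T'.orderEmbOfFin_mem hT'card j)
        have hepos : ∀ j : Fin (b - 1), 0 < (e j : ℕ) := by
          intro j
          have h1 := (Finset.mem_filter.mp (Finset.mem_filter.mp (hmem j)).1).2
          have h2 : (e j : ℕ) ≠ 0 := fun h => h1 (Fin.ext h)
          omega
        have hecol : ∀ j : Fin (b - 1), χ z (e j) = 1 := fun j =>
          (Finset.mem_filter.mp (hmem j)).2
        refine ⟨fun i => if h : (i : ℕ) = 0 then z else
          e ⟨(i : ℕ) - 1, by have := i.isLt; omega⟩, ?_, ?_⟩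
        · intro i j hij
          rw [Fin.lt_def] at hij
          dsimp only
          split_ifs with h1 h2 h2
          · omega
          · rw [Fin.lt_def]
            have := hepos ⟨(j : ℕ) - 1, by have := j.isLt; omega⟩
            simp [hz]
            omega
          · omega
          · exact e.strictMono (by rw [Fin.mk_lt_mk]; omega)
        · intro u v huv
          rw [starSC, SimpleGraph.fromRel_adj] at huv
          obtain ⟨hne, h0⟩ := huv
          dsimp only
          rcases h0 with h0 | h0
          · have hv0 : (v : ℕ) ≠ 0 := fun h => hne (Fin.ext (by omega))
            rw [dif_pos h0, dif_neg hv0]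
            exact hecol _
          · have hu0 : (u : ℕ) ≠ 0 := fun h => hne (Fin.ext (by omega))
            rw [dif_pos h0, dif_neg hu0, hsym]
            exact hecol _
      · -- apply induction hypothesis inside A
        have hAcard : 1 + (a - 1) * (b - 1) ≤ A.card := by omega
        set e := A.orderEmbOfFin (rfl : A.card = A.card) with he
        have hmem : ∀ j : Fin A.card, (e j) ∈ A := fun j =>
          A.orderEmbOfFin_mem rfl j
        have hepos : ∀ j : Fin A.card, 0 < (e j : ℕ) := by
          intro j
          have h1 := (Finset.mem_filter.mp (Finset.mem_filter.mp (hmem j)).1).2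
          have h2 : (e j : ℕ) ≠ 0 := fun h => h1 (Fin.ext h)
          omega
        have hecol : ∀ j : Fin A.card, χ z (e j) = 0 := fun j =>
          fin2_eq_zero _ (Finset.mem_filter.mp (hmem j)).2
        rcases ih A.card hAcard (fun u v => χ (e u) (e v)) (fun u v => hsym _ _)
          with ⟨φ', hm', hc'⟩ | ⟨φ', hm', hc'⟩
        · left
          refine ⟨fun i => if h : (i : ℕ) = 0 then z else
            e (φ' ⟨(i : ℕ) - 1, by have := i.isLt; omega⟩), ?_, ?_⟩
          · intro i j hij
            rw [Fin.lt_def] at hij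
            dsimp only
            split_ifs with h1 h2 h2
            · omega
            · rw [Fin.lt_def]
              have := hepos (φ' ⟨(j : ℕ) - 1, by have := j.isLt; omega⟩)
              simp [hz]
              omega
            · omega
            · exact e.strictMono (hm' (by rw [Fin.mk_lt_mk]; omega))
          · intro u v huv
            have hne : u ≠ v := huv
            dsimp only
            split_ifs with h1 h2 h2
            · exact absurd (Fin.ext (by omega)) hne
            · exact hecol _
            · rw [hsym]; exact hecol _
            · refine hc' _ _ ?_
              have : (⊤ : SimpleGraph (Fin a)).Adj
                  ⟨(u : ℕ) - 1, by have := u.isLt; omega⟩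
                  ⟨(v : ℕ) - 1, by have := v.isLt; omega⟩ ↔ _ := SimpleGraph.top_adj _ _
              rw [this]
              intro hcon
              rw [Fin.mk_eq_mk] at hcon
              exact hne (Fin.ext (by omega))
        · right
          exact ⟨fun i => e (φ' i), e.strictMono.comp hm', fun u v h => hc' u v h⟩

private lemma key_lower (a b n : ℕ) (ha : 2 ≤ a) (hb : 2 ≤ b) (hn : n ≤ (a - 1) * (b - 1)) :
    ∃ χ : Fin n → Fin n → Fin 2, (∀ u v, χ u v = χ v u) ∧
      ¬ ContainsOrd (⊤ : SimpleGraph (Fin a)) χ 0 ∧ ¬ ContainsOrd (starSC b) χ 1 := by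
  have hbpos : 0 < b - 1 := by omega
  refine ⟨fun u v => if (u : ℕ) / (b - 1) = (v : ℕ) / (b - 1) then 1 else 0, ?_, ?_, ?_⟩
  · intro u v
    dsimp only
    by_cases h : (u : ℕ) / (b - 1) = (v : ℕ) / (b - 1)
    · rw [if_pos h, if_pos h.symm]
    · rw [if_neg h, if_neg (fun h' => h h'.symm)]
  · rintro ⟨φ, hmono, hcol⟩
    have hdiv : ∀ i : Fin a, ((φ i : ℕ)) / (b - 1) < a - 1 := by
      intro i
      rw [Nat.div_lt_iff_lt_mul hbpos]
      have := (φ i).isLt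
      omega
    have hinj : Function.Injective (fun i : Fin a => (⟨(φ i : ℕ) / (b - 1), hdiv i⟩ : Fin (a - 1))) := by
      intro i j hij
      by_contra hne
      have hadj : (⊤ : SimpleGraph (Fin a)).Adj i j := hne
      have hc := hcol i j hadj
      dsimp only at hc
      rw [Fin.mk_eq_mk] at hij
      rw [if_pos hij] at hc
      exact absurd hc (by decide)
    have := Fintype.card_le_of_injective _ hinj
    simp only [Fintype.card_fin] at this
    omega
  · rintro ⟨φ, hmono, hcol⟩
    set z : Fin b := ⟨0, by omega⟩ with hz
    have hsame : ∀ i : Fin b, ((φ i : ℕ)) / (b - 1) = ((φ z : ℕ)) / (b - 1) := by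
      intro i
      by_cases hi : i = z
      · rw [hi]
      · have hadj : (starSC b).Adj z i := by
          rw [starSC, SimpleGraph.fromRel_adj]
          exact ⟨fun h => hi h.symm, Or.inl rfl⟩
        have hc := hcol z i hadj
        dsimp only at hc
        by_contra hne
        rw [if_neg (fun h' => hne h'.symm)] at hc
        exact absurd hc (by decide)
    have hinj : Function.Injective (fun i : Fin b =>
        (⟨(φ i : ℕ) % (b - 1), Nat.mod_lt _ hbpos⟩ : Fin (b - 1))) := by
      intro i j hij
      rw [Fin.mk_eq_mk] at hij
      have h1 := hsame i
      have h2 := hsame j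
      have heq : (φ i : ℕ) = (φ j : ℕ) := by
        have e1 := Nat.div_add_mod (φ i : ℕ) (b - 1)
        have e2 := Nat.div_add_mod (φ j : ℕ) (b - 1)
        rw [h1] at e1
        rw [h2] at e2
        omega
      exact hmono.injective (Fin.ext heq)
    have := Fintype.card_le_of_injective _ hinj
    simp only [Fintype.card_fin] at this
    omega

theorem stmt13 (a b : ℕ) (ha : 1 ≤ a) (hb : 1 ≤ b) :
    Rord2 (⊤ : SimpleGraph (Fin a)) (starSC b) = 1 + (a - 1) * (b - 1) := by
  have hNS : (1 + (a - 1) * (b - 1)) ∈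
      {n | ∀ χ : Fin n → Fin n → Fin 2, (∀ u v, χ u v = χ v u) →
        ContainsOrd (⊤ : SimpleGraph (Fin a)) χ 0 ∨ ContainsOrd (starSC b) χ 1} := by
    intro χ hsym
    exact key_upper b hb a _ le_rfl χ hsym
  refine le_antisymm (Nat.sInf_le hNS) ?_
  refine le_csInf ⟨_, hNS⟩ ?_
  intro n hn
  by_contra hcon
  push_neg at hcon
  have hnle : n ≤ (a - 1) * (b - 1) := by omega
  rcases Nat.eq_zero_or_pos n with hn0 | hn1
  · subst hn0
    rcases hn (fun _ _ => 0) (fun _ _ => rfl) with ⟨φ, _, _⟩ | ⟨φ, _, _⟩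
    · exact (φ ⟨0, by omega⟩).elim0
    · exact (φ ⟨0, by omega⟩).elim0
  · have hab : 2 ≤ a ∧ 2 ≤ b := by
      constructor <;> by_contra h <;> push_neg at h <;>
        (have : a - 1 = 0 ∨ b - 1 = 0 := by omega) <;> rcases this with h' | h' <;>
        simp [h'] at hnle <;> omega
    obtain ⟨χ, hsym, h1, h2⟩ := key_lower a b n hab.1 hab.2 hnle
    rcases hn χ hsym with h | h
    · exact h1 h
    · exact h2 h
end

section
/- For any even a, b ≥ 2, the ordered Ramsey number of nested matchings satisfies R_ord(M_a^nest, M_b^nest) = a + b − 2. -/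
open SimpleGraph Finset

/-!
Upper bound: a symmetric 2-coloring of `K_{a+b-2}` has `a/2 + b/2 - 1` diameters `{j, n-1-j}`,
so by pigeonhole `a/2` of them have color 0 or `b/2` have color 1. Any `k` diameters of one color
form, in increasing order, a nested matching on `2k` vertices: their vertex set is closed under
reflection, hence its increasing enumeration commutes with reflection.

Lower bound: on `n ≤ a+b-3` vertices color an edge 1 iff both endpoints lie in
`[a/2 - 1, a/2 + b - 3]`. The innermost edge of an increasing copy of `M_a` is forced into this
interval, and the outermost edge of an increasing copy of `M_b` spans at least `b - 1`, more than
the length `b - 2` of the interval.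
-/

lemma StrictMono.val_sub_val_le {m n : ℕ} {φ : Fin m → Fin n} (hφ : StrictMono φ) {i j : Fin m}
    (hij : i ≤ j) : (j : ℕ) - i ≤ φ j - φ i := by
  have h := card_le_card_of_injOn (s := Icc i j) (t := Icc (φ i) (φ j)) φ
    (fun x hx => by
      simp only [coe_Icc, Set.mem_Icc] at hx ⊢
      exact ⟨hφ.monotone hx.1, hφ.monotone hx.2⟩)
    hφ.injective.injOn
  simp only [Fin.card_Icc] at h
  omega

lemma StrictMono.val_le_val_apply {m n : ℕ} {φ : Fin m → Fin n} (hφ : StrictMono φ) (i : Fin m) :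
    (i : ℕ) ≤ φ i := by
  have := hφ.val_sub_val_le (i := ⟨0, i.pos⟩) (Nat.zero_le (i : ℕ))
  simp only at this
  omega

lemma StrictMono.val_apply_add_le {m n : ℕ} {φ : Fin m → Fin n} (hφ : StrictMono φ) (i : Fin m) :
    (φ i : ℕ) + (m - i) ≤ n := by
  have hi := i.isLt
  have hspread := hφ.val_sub_val_le (j := ⟨m - 1, by omega⟩) (Nat.le_sub_one_of_lt hi)
  have hlast := (φ ⟨m - 1, by omega⟩).isLt
  simp only at hspread
  omega

lemma nestedMatching_adj {m : ℕ} {u v : Fin m} :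
    (nestedMatching m).Adj u v ↔ u ≠ v ∧ (u : ℕ) + v = m - 1 := by
  simp only [nestedMatching, fromRel_adj, add_comm (v : ℕ), or_self]

section Embeddings

variable {m n K : ℕ} {χ : Fin n → Fin n → Fin K} {c : Fin K}

lemma ContainsOrd.exists_wide_edge (h : ContainsOrd (nestedMatching m) χ c) (hm : 2 ≤ m) :
    ∃ x y : Fin n, (x : ℕ) + (m - 1) ≤ y ∧ χ x y = c := by
  obtain ⟨φ, hφ, hχ⟩ := h
  refine ⟨φ ⟨0, by omega⟩, φ ⟨m - 1, by omega⟩, ?_, hχ _ _ (nestedMatching_adj.2 ⟨?_, ?_⟩)⟩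
  · have := hφ.val_sub_val_le (i := ⟨0, by omega⟩) (j := ⟨m - 1, by omega⟩) (Nat.zero_le _)
    simp only at this
    omega
  · simp only [ne_eq, Fin.ext_iff]; omega
  · simp

lemma ContainsOrd.exists_central_edge {k : ℕ} (h : ContainsOrd (nestedMatching (2 * k)) χ c)
    (hk : 1 ≤ k) : ∃ x y : Fin n, k - 1 ≤ (x : ℕ) ∧ x < y ∧ (y : ℕ) + k ≤ n ∧ χ x y = c := by
  obtain ⟨φ, hφ, hχ⟩ := h
  have hlt : (⟨k - 1, by omega⟩ : Fin (2 * k)) < ⟨k, by omega⟩ := Fin.mk_lt_mk.2 (by omega)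
  refine ⟨φ ⟨k - 1, by omega⟩, φ ⟨k, by omega⟩, hφ.val_le_val_apply ⟨k - 1, _⟩, hφ hlt, ?_,
    hχ _ _ (nestedMatching_adj.2 ⟨hlt.ne, by dsimp only; omega⟩)⟩
  have := hφ.val_apply_add_le ⟨k, by omega⟩
  simp only at this
  omega

end Embeddings

def intervalColoring (n lo hi : ℕ) (x y : Fin n) : Fin 2 :=
  if (x : ℕ) ∈ Icc lo hi ∧ (y : ℕ) ∈ Icc lo hi then 1 else 0

lemma intervalColoring_comm (n lo hi : ℕ) (x y : Fin n) :
    intervalColoring n lo hi x y = intervalColoring n lo hi y x := by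
  simp only [intervalColoring, and_comm]

lemma not_containsOrd_intervalColoring_zero {k l n : ℕ} (hk : 1 ≤ k) (hn : n + 3 ≤ 2 * k + 2 * l) :
    ¬ ContainsOrd (nestedMatching (2 * k)) (intervalColoring n (k - 1) (k + 2 * l - 3)) 0 := by
  intro h
  obtain ⟨x, y, hx, hxy, hy, hχ⟩ := h.exists_central_edge hk
  rw [Fin.lt_def] at hxy
  simp only [intervalColoring, mem_Icc] at hχ
  rw [if_pos (by omega)] at hχ
  exact absurd hχ (by decide)

lemma not_containsOrd_intervalColoring_one {k l n : ℕ} (hl : 1 ≤ l) :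
    ¬ ContainsOrd (nestedMatching (2 * l)) (intervalColoring n (k - 1) (k + 2 * l - 3)) 1 := by
  intro h
  obtain ⟨x, y, hxy, hχ⟩ := h.exists_wide_edge (by omega)
  simp only [intervalColoring, mem_Icc] at hχ
  rw [if_neg (by omega)] at hχ
  exact absurd hχ (by decide)

lemma Finset.orderEmbOfFin_rev {n m : ℕ} {S : Finset (Fin n)} (hS : ∀ x ∈ S, x.rev ∈ S)
    (h : #S = m) (i : Fin m) : S.orderEmbOfFin h i.rev = (S.orderEmbOfFin h i).rev := by
  have huniq := S.orderEmbOfFin_unique h (f := fun i => (S.orderEmbOfFin h i.rev).rev)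
    (fun i => hS _ (S.orderEmbOfFin_mem h _))
    (fun i j hij => Fin.rev_lt_rev.2 ((S.orderEmbOfFin h).strictMono (Fin.rev_lt_rev.2 hij)))
  simpa using (congrFun huniq i.rev).symm

lemma containsOrd_nestedMatching_of_le_card {n K k : ℕ} {χ : Fin n → Fin n → Fin K} {c : Fin K}
    (hχ : ∀ u v, χ u v = χ v u) (T : Finset (Fin n)) (hT : ∀ j ∈ T, j < j.rev ∧ χ j j.rev = c)
    (hk : k ≤ #T) : ContainsOrd (nestedMatching (2 * k)) χ c := by
  obtain ⟨T', hT', hcard⟩ := exists_subset_card_eq hk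
  set S := T' ∪ T'.image Fin.rev
  have hdisj : Disjoint T' (T'.image Fin.rev) := by
    rw [Finset.disjoint_left]
    rintro x hx hx'
    obtain ⟨y, hy, rfl⟩ := mem_image.1 hx'
    exact (hT _ (hT' hx)).1.not_gt (by simpa using (hT _ (hT' hy)).1)
  have hS : #S = 2 * k := by
    rw [card_union_of_disjoint hdisj, card_image_of_injective _ Fin.rev_injective, hcard, two_mul]
  have hSrev : ∀ x ∈ S, x.rev ∈ S := by
    intro x hx
    rcases mem_union.1 hx with hx | hx
    · exact mem_union_right _ (mem_image_of_mem _ hx)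
    · obtain ⟨y, hy, rfl⟩ := mem_image.1 hx
      rw [Fin.rev_rev]
      exact mem_union_left _ hy
  refine ⟨S.orderEmbOfFin hS, (S.orderEmbOfFin hS).strictMono, fun u v huv => ?_⟩
  have hv : v = u.rev := by
    rw [nestedMatching_adj] at huv
    ext; simp only [Fin.val_rev]; omega
  rw [hv, S.orderEmbOfFin_rev hSrev]
  rcases mem_union.1 (S.orderEmbOfFin_mem hS u) with hx | hx
  · exact (hT _ (hT' hx)).2
  · obtain ⟨y, hy, hy'⟩ := mem_image.1 hx
    rw [← hy', Fin.rev_rev, hχ]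
    exact (hT _ (hT' hy)).2

lemma containsOrd_nestedMatching_or {k l n : ℕ} (hkl : 2 ≤ k + l) (hn : n + 2 = 2 * k + 2 * l)
    (χ : Fin n → Fin n → Fin 2) (hχ : ∀ u v, χ u v = χ v u) :
    ContainsOrd (nestedMatching (2 * k)) χ 0 ∨ ContainsOrd (nestedMatching (2 * l)) χ 1 := by
  set T := Iio (⟨k + l - 1, by omega⟩ : Fin n)
  have hT : ∀ j ∈ T, j < j.rev := by
    intro j hj
    simp only [T, mem_Iio, Fin.lt_def, Fin.val_rev] at hj ⊢
    omega
  have hcard := card_filter_add_card_filter_not (s := T) (fun j => χ j j.rev = 0)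
  rw [show #T = k + l - 1 from Fin.card_Iio _] at hcard
  by_cases h : k ≤ #(T.filter fun j => χ j j.rev = 0)
  · left
    exact containsOrd_nestedMatching_of_le_card hχ _
      (fun j hj => ⟨hT j (mem_filter.1 hj).1, (mem_filter.1 hj).2⟩) h
  · right
    refine containsOrd_nestedMatching_of_le_card hχ (T.filter fun j => ¬χ j j.rev = 0)
      (fun j hj => ⟨hT j (mem_filter.1 hj).1, Fin.eq_one_of_ne_zero _ (mem_filter.1 hj).2⟩) ?_
    omega

lemma rord2_eq_of_forall {a b N : ℕ} {H₁ : SimpleGraph (Fin a)} {H₂ : SimpleGraph (Fin b)}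
    (hup : ∀ χ : Fin N → Fin N → Fin 2, (∀ u v, χ u v = χ v u) →
      ContainsOrd H₁ χ 0 ∨ ContainsOrd H₂ χ 1)
    (hlow : ∀ n < N, ∃ χ : Fin n → Fin n → Fin 2, (∀ u v, χ u v = χ v u) ∧
      ¬ ContainsOrd H₁ χ 0 ∧ ¬ ContainsOrd H₂ χ 1) :
    Rord2 H₁ H₂ = N := by
  refine IsLeast.csInf_eq ⟨hup, fun n hn => not_lt.1 fun hlt => ?_⟩
  obtain ⟨χ, hχ, h₁, h₂⟩ := hlow n hlt
  exact (hn χ hχ).elim h₁ h₂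

theorem stmt14 (a b : ℕ) (ha : 2 ≤ a) (hb : 2 ≤ b) (hea : Even a) (heb : Even b) :
    Rord2 (nestedMatching a) (nestedMatching b) = a + b - 2 := by
  obtain ⟨k, rfl⟩ := even_iff_two_dvd.1 hea
  obtain ⟨l, rfl⟩ := even_iff_two_dvd.1 heb
  refine rord2_eq_of_forall (containsOrd_nestedMatching_or (by omega) (by omega)) fun n hn => ?_
  exact ⟨intervalColoring n (k - 1) (k + 2 * l - 3), intervalColoring_comm n _ _,
    not_containsOrd_intervalColoring_zero (by omega) (by omega),
    not_containsOrd_intervalColoring_one (by omega)⟩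
end
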